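/- Let X be a hereditarily indecomposable Banach space, Y = [y] the closed span of a normalized basic sequence with constant 2, T : Y → X a bounded operator that is an isomorphism onto its image, and Z the closed span of another normalized block basic sequence in X. Then there exist a normalized block basic sequence (y'ᵢ) of (yᵢ) and a block basic sequence (zᵢ) in Z such that ∑ᵢ ‖T(y'ᵢ) - zᵢ‖ < ∞. -/

import Mathlib

open Filter Topology

noncomputable section

variable {E F : Type*}

def IsInfDimClosed [NormedAddCommGroup E] [NormedSpace ℂ E] (M : Submodule ℂ E) : Prop :=
  IsClosed (M : Set E) ∧ ¬ FiniteDimensional ℂ M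

def HI (E : Type*) [NormedAddCommGroup E] [NormedSpace ℂ E] : Prop :=
  ∀ M N : Submodule ℂ E, IsInfDimClosed M → IsInfDimClosed N → ∀ ε > 0,
    ∃ u ∈ M, ∃ v ∈ N, ‖u‖ = 1 ∧ ‖v‖ = 1 ∧ ‖u - v‖ ≤ ε

def StrictlySingular [NormedAddCommGroup E] [NormedSpace ℂ E]
    [NormedAddCommGroup F] [NormedSpace ℂ F] (S : E →L[ℂ] F) : Prop :=
  ∀ M : Submodule ℂ E, IsInfDimClosed M → ∀ c > 0, ∃ x ∈ M, ‖S x‖ < c * ‖x‖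

def IsNBasic2 [NormedAddCommGroup E] [NormedSpace ℂ E] (y : ℕ → E) : Prop :=
  (∀ i, ‖y i‖ = 1) ∧ ∀ (a : ℕ → ℂ) (m n : ℕ), m ≤ n →
    ‖∑ i ∈ Finset.range m, a i • y i‖ ≤ 2 * ‖∑ i ∈ Finset.range n, a i • y i‖

def IsBlockOf [NormedAddCommGroup E] [NormedSpace ℂ E] (w z : ℕ → E) : Prop :=
  ∃ (a : ℕ → ℂ) (F : ℕ → Finset ℕ), (∀ k, (F k).Nonempty) ∧
    (∀ k i j, i ∈ F k → j ∈ F (k+1) → i < j) ∧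
    (∀ k, w k = ∑ i ∈ F k, a i • z i) ∧ (∀ k, w k ≠ 0)

def IsNBlockOf [NormedAddCommGroup E] [NormedSpace ℂ E] (w z : ℕ → E) : Prop :=
  IsBlockOf w z ∧ ∀ k, ‖w k‖ = 1

def cSpan [NormedAddCommGroup E] [NormedSpace ℂ E] (y : ℕ → E) : Submodule ℂ E :=
  (Submodule.span ℂ (Set.range y)).topologicalClosure

def tailSpan [NormedAddCommGroup E] [NormedSpace ℂ E] (y : ℕ → E) (k : ℕ) : Submodule ℂ E :=
  cSpan (fun i => y (i + k))

theorem mem_cSpan [NormedAddCommGroup E] [NormedSpace ℂ E] (y : ℕ → E) (i : ℕ) :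
    y i ∈ cSpan y :=
  (Submodule.span ℂ (Set.range y)).le_topologicalClosure (Submodule.subset_span ⟨i, rfl⟩)

theorem tailSpan_le [NormedAddCommGroup E] [NormedSpace ℂ E] (y : ℕ → E) (k : ℕ) :
    tailSpan y k ≤ cSpan y :=
  Submodule.topologicalClosure_mono (Submodule.span_mono (by rintro _ ⟨i, rfl⟩; exact ⟨i + k, rfl⟩))

def inclCLM [NormedAddCommGroup E] [NormedSpace ℂ E] {M N : Submodule ℂ E} (h : M ≤ N) :
    M →L[ℂ] N :=
  LinearMap.mkContinuous (Submodule.inclusion h) 1 (by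
    intro x
    simp [Submodule.inclusion])

/-! Since `T` is bounded below, `T [y_i : i ≥ n]` is closed and infinite-dimensional, and the HI
property applied to it and `[z_i : i ≥ n]` yields `x` in the tail of `Y` and `v` in the tail of
`Z` with `‖T x - v‖` small relative to `‖x‖`. Approximating both by finitely supported vectors beyond `n` and normalising
gives, for every `n` and `ε`, a unit vector `p` and a nonzero `q` supported on a common interval
`[n, m)` with `‖T p - q‖ < ε`. Iterating with `ε = 2⁻ᵏ` on consecutive intervals produces the two
block sequences, and the errors are summable. -/

open Submodule

section BasicSequence

variable [NormedAddCommGroup E] [NormedSpace ℂ E] {y : ℕ → E}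

theorem IsNBasic2.norm_coeff_le (hy : IsNBasic2 y) (a : ℕ → ℂ) {n j : ℕ} (hj : j < n) :
    ‖a j‖ ≤ 4 * ‖∑ i ∈ Finset.range n, a i • y i‖ := by
  have hjy : a j • y j =
      ∑ i ∈ Finset.range (j + 1), a i • y i - ∑ i ∈ Finset.range j, a i • y i := by
    rw [Finset.sum_range_succ, add_sub_cancel_left]
  calc ‖a j‖ = ‖a j • y j‖ := by rw [norm_smul, hy.1 j, mul_one]
    _ ≤ ‖∑ i ∈ Finset.range (j + 1), a i • y i‖ + ‖∑ i ∈ Finset.range j, a i • y i‖ := by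
      rw [hjy]; exact norm_sub_le _ _
    _ ≤ 4 * ‖∑ i ∈ Finset.range n, a i • y i‖ := by
      linarith [hy.2 a (j + 1) n hj, hy.2 a j n hj.le]

theorem IsNBasic2.linearIndependent (hy : IsNBasic2 y) : LinearIndependent ℂ y := by
  refine linearIndependent_iff''.2 fun s g hg hsum j => ?_
  obtain ⟨n, hsn⟩ := Finset.exists_nat_subset_range s
  have hsn' : s ⊆ Finset.range (max n (j + 1)) :=
    hsn.trans (Finset.range_subset_range.2 (le_max_left _ _))
  have hzero : ∑ i ∈ Finset.range (max n (j + 1)), g i • y i = 0 := by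
    rw [← Finset.sum_subset hsn' fun i _ hi => by rw [hg i hi, zero_smul], hsum]
  simpa [hzero] using hy.norm_coeff_le g (n := max n (j + 1)) (lt_max_of_lt_right j.lt_succ_self)

theorem isInfDimClosed_cSpan (hy : LinearIndependent ℂ y) : IsInfDimClosed (cSpan y) := by
  refine ⟨isClosed_topologicalClosure _, fun _ => ?_⟩
  have : LinearIndependent ℂ fun i => (⟨y i, mem_cSpan y i⟩ : cSpan y) :=
    LinearIndependent.of_comp (cSpan y).subtype hy
  have := this.finite
  exact not_finite ℕ

theorem IsNBasic2.isInfDimClosed_tailSpan (hy : IsNBasic2 y) (n : ℕ) :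
    IsInfDimClosed (tailSpan y n) :=
  isInfDimClosed_cSpan (hy.linearIndependent.comp _ (add_left_injective n))

end BasicSequence

section Spans

variable [NormedAddCommGroup E] [NormedSpace ℂ E] {y : ℕ → E}

theorem span_image_le_cSpan (s : Set ℕ) : span ℂ (y '' s) ≤ cSpan y :=
  (span_mono (Set.image_subset_range y s)).trans (le_topologicalClosure _)

theorem tailSpan_eq (n : ℕ) : tailSpan y n = (span ℂ (y '' Set.Ici n)).topologicalClosure := by
  have hrange : Set.range (fun i => y (i + n)) = y '' Set.Ici n := by
    ext x
    constructor
    · rintro ⟨i, rfl⟩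
      exact ⟨i + n, Nat.le_add_left n i, rfl⟩
    · rintro ⟨j, hj, rfl⟩
      exact ⟨j - n, congrArg y (Nat.sub_add_cancel hj)⟩
  rw [tailSpan, cSpan, hrange]

theorem span_image_Ico_mono (y : ℕ → E) (n : ℕ) : Monotone fun m => span ℂ (y '' Set.Ico n m) :=
  fun _ _ h => span_mono (Set.image_mono (Set.Ico_subset_Ico_right h))

theorem exists_mem_span_image_Ico {n : ℕ} {p : E} (hp : p ∈ span ℂ (y '' Set.Ici n)) :
    ∃ m, p ∈ span ℂ (y '' Set.Ico n m) := by
  rw [← Set.iUnion_Ico_right, Set.image_iUnion, span_iUnion] at hp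
  exact (mem_iSup_of_directed _ (span_image_Ico_mono y n).directed_le).1 hp

theorem isBlockOf_of_mem_span_Ico {w : ℕ → E} {N : ℕ → ℕ} (hN : StrictMono N)
    (hw : ∀ k, w k ∈ span ℂ (y '' Set.Ico (N k) (N (k + 1)))) (hw0 : ∀ k, w k ≠ 0) :
    IsBlockOf w y := by
  choose l hl hlw using fun k => (Finsupp.mem_span_image_iff_linearCombination ℂ).1 (hw k)
  have hsupp : ∀ k, (l k).support ⊆ Finset.Ico (N k) (N (k + 1)) := fun k => by
    rw [← Finset.coe_subset, Finset.coe_Ico]; exact hl k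
  -- the blocks have disjoint supports, so one coefficient sequence serves all of them
  have hcoeff : ∀ k, ∀ i ∈ Finset.Ico (N k) (N (k + 1)), ∑' k', l k' i = l k i := by
    intro k i hi
    refine tsum_eq_single k fun k' hk' => Finsupp.notMem_support_iff.1 fun hi' => ?_
    have hik' : i ∈ Set.Ico (N k') (N (k' + 1)) := Set.mem_Ico.2 (Finset.mem_Ico.1 (hsupp k' hi'))
    have hik : i ∈ Set.Ico (N k) (N (k + 1)) := Set.mem_Ico.2 (Finset.mem_Ico.1 hi)
    exact Set.disjoint_left.1 (hN.monotone.pairwise_disjoint_on_Ico_succ hk') hik' hik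
  refine ⟨fun i => ∑' k, l k i, fun k => Finset.Ico (N k) (N (k + 1)),
    fun k => Finset.nonempty_Ico.2 (hN k.lt_succ_self), fun k i j hi hj => ?_, fun k => ?_, hw0⟩
  · exact (Finset.mem_Ico.1 hi).2.trans_le (Finset.mem_Ico.1 hj).1
  · rw [← hlw k, Finsupp.linearCombination_apply,
      Finsupp.sum_of_support_subset _ (hsupp k) _ fun i _ => zero_smul ℂ (y i)]
    exact Finset.sum_congr rfl fun i hi => congrArg (· • y i) (hcoeff k i hi).symm

end Spans

theorem exists_strictMono_chain {α : Type*} {Q : ℕ → ℕ → ℕ → α → Prop}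
    (h : ∀ k n, ∃ m, n < m ∧ ∃ a, Q k n m a) :
    ∃ N : ℕ → ℕ, StrictMono N ∧ ∃ a : ℕ → α, ∀ k, Q k (N k) (N (k + 1)) (a k) := by
  choose m hm a ha using h
  let N : ℕ → ℕ := fun k => Nat.rec 0 (fun k Nk => m k Nk) k
  exact ⟨N, strictMono_nat_of_lt_succ fun k => hm k (N k), fun k => a k (N k), fun k => ha k (N k)⟩

section Operators

variable [NormedAddCommGroup E] [NormedSpace ℂ E] [NormedAddCommGroup F] [NormedSpace ℂ F]

theorem isInfDimClosed_range_of_bound [CompleteSpace E] (hE : ¬ FiniteDimensional ℂ E)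
    (S : E →L[ℂ] F) {c : ℝ} (hc : 0 < c) (hS : ∀ u, c * ‖u‖ ≤ ‖S u‖) :
    IsInfDimClosed (S : E →ₗ[ℂ] F).range := by
  have hanti : AntilipschitzWith c⁻¹.toNNReal S := S.antilipschitz_of_bound fun u => by
    rw [Real.coe_toNNReal _ (inv_nonneg.2 hc.le), inv_mul_eq_div, le_div_iff₀' hc]
    exact hS u
  refine ⟨?_, fun _ => hE ?_⟩
  · exact LinearMap.coe_range (S : E →ₗ[ℂ] F) ▸ hanti.isClosed_range S.uniformContinuous
  · exact Module.Finite.equiv (LinearEquiv.ofInjective (S : E →ₗ[ℂ] F) hanti.injective).symm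

theorem exists_smul_norm_eq_one_of_norm_sub_lt {T : E →L[ℂ] F} {p : E} {q : F} {ε : ℝ}
    (h : ‖T p - q‖ < ε * ‖p‖) :
    ∃ r : ℂ, r ≠ 0 ∧ ‖r • p‖ = 1 ∧ ‖T (r • p) - r • q‖ < ε := by
  have hp : p ≠ 0 := by
    rintro rfl
    exact (norm_nonneg q).not_gt (by simpa using h)
  have hp' : 0 < ‖p‖ := norm_pos_iff.2 hp
  refine ⟨(‖p‖⁻¹ : ℂ), by simpa using hp, norm_smul_inv_norm hp, ?_⟩
  rw [map_smul, ← smul_sub, norm_smul, norm_inv, Complex.norm_real, norm_norm,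
    inv_mul_lt_iff₀ hp', mul_comm]
  exact h

end Operators

section HereditarilyIndecomposable

variable {X : Type*} [NormedAddCommGroup X] [NormedSpace ℂ X] [CompleteSpace X]
  {y z : ℕ → X} {T : cSpan y →L[ℂ] X} {c : ℝ}

theorem HI.exists_near_tailSpan (hX : HI X) (hy : IsNBasic2 y) (hz : IsNBasic2 z) (hc : 0 < c)
    (hT : ∀ u : cSpan y, c * ‖u‖ ≤ ‖T u‖) (n : ℕ) {ε : ℝ} (hε : 0 < ε) :
    ∃ x : cSpan y, (x : X) ∈ tailSpan y n ∧ ∃ v ∈ tailSpan z n, v ≠ 0 ∧ ‖T x - v‖ < ε * ‖x‖ := by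
  let ι := inclCLM (tailSpan_le y n)
  have : CompleteSpace (tailSpan y n) := (hy.isInfDimClosed_tailSpan n).1.completeSpace_coe
  have hrange := isInfDimClosed_range_of_bound (hy.isInfDimClosed_tailSpan n).2 (T.comp ι) hc
    fun u => hT (ι u)
  set ε' := ε / (‖T‖ + 1)
  obtain ⟨u, hu, v, hv, hun, hvn, huv⟩ :=
    hX _ _ hrange (hz.isInfDimClosed_tailSpan n) ε' (by positivity)
  obtain ⟨x, rfl⟩ := LinearMap.mem_range.1 hu
  refine ⟨ι x, x.2, v, hv, norm_ne_zero_iff.1 (hvn ▸ one_ne_zero), ?_⟩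
  have hTx : 1 ≤ ‖T‖ * ‖ι x‖ := hun ▸ T.le_opNorm (ι x)
  have hx : 0 < ‖ι x‖ := pos_of_mul_pos_right (one_pos.trans_le hTx) (norm_nonneg T)
  have hε' : ε' * ‖T‖ < ε := by
    rw [div_mul_eq_mul_div, div_lt_iff₀ (by positivity)]
    linarith
  calc ‖T (ι x) - v‖ ≤ ε' * (‖T‖ * ‖ι x‖) := huv.trans (le_mul_of_one_le_right (by positivity) hTx)
    _ = ε' * ‖T‖ * ‖ι x‖ := (mul_assoc _ _ _).symm
    _ < ε * ‖ι x‖ := mul_lt_mul_of_pos_right hε' hx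

theorem HI.exists_span_Ico_near (hX : HI X) (hy : IsNBasic2 y) (hz : IsNBasic2 z) (hc : 0 < c)
    (hT : ∀ u : cSpan y, c * ‖u‖ ≤ ‖T u‖) (n : ℕ) {ε : ℝ} (hε : 0 < ε) :
    ∃ m, n < m ∧ ∃ p ∈ span ℂ (y '' Set.Ico n m), ∃ q ∈ span ℂ (z '' Set.Ico n m),
      ‖p‖ = 1 ∧ q ≠ 0 ∧ ∀ hp : p ∈ cSpan y, ‖T ⟨p, hp⟩ - q‖ < ε := by
  obtain ⟨x, hx, v, hv, hv0, hxv⟩ := hX.exists_near_tailSpan hy hz hc hT n hε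
  -- an open condition, so it survives approximating `x` and `v` by finitely supported vectors
  have hopen : ∀ᶠ pq : cSpan y × X in 𝓝 (x, v), pq.2 ≠ 0 ∧ ‖T pq.1 - pq.2‖ < ε * ‖pq.1‖ :=
    (continuous_snd.tendsto (x, v) |>.eventually_ne hv0).and
      ((((T.continuous.comp continuous_fst).sub continuous_snd).norm.tendsto (x, v)).eventually_lt
        ((continuous_const.mul continuous_fst.norm).tendsto (x, v)) hxv)
  rw [tailSpan_eq, ← SetLike.mem_coe, topologicalClosure_coe, mem_closure_iff_seq_limit] at hx hv
  obtain ⟨s, hs, hsx⟩ := hx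
  obtain ⟨t, ht, htv⟩ := hv
  let s' : ℕ → cSpan y := fun k => ⟨s k, span_image_le_cSpan _ (hs k)⟩
  have hs'x : Tendsto s' atTop (𝓝 x) := tendsto_subtype_rng.2 hsx
  obtain ⟨k, ht0, hst⟩ := ((hs'x.prodMk_nhds htv).eventually hopen).exists
  obtain ⟨r, hr0, hr1, hrst⟩ := exists_smul_norm_eq_one_of_norm_sub_lt hst
  obtain ⟨m₁, hm₁⟩ := exists_mem_span_image_Ico (smul_mem _ r (hs k))
  obtain ⟨m₂, hm₂⟩ := exists_mem_span_image_Ico (smul_mem _ r (ht k))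
  exact ⟨max (n + 1) (max m₁ m₂), by omega, r • s k, span_image_Ico_mono y n (by omega) hm₁,
    r • t k, span_image_Ico_mono z n (by omega) hm₂, hr1, smul_ne_zero hr0 ht0, fun _ => hrst⟩

end HereditarilyIndecomposable

theorem statement9_general {X : Type*} [NormedAddCommGroup X] [NormedSpace ℂ X] [CompleteSpace X]
    (hX : HI X) (y : ℕ → X) (hy : IsNBasic2 y)
    (T : cSpan y →L[ℂ] X) (c : ℝ) (hc : 0 < c)
    (hT : ∀ u : cSpan y, c * ‖u‖ ≤ ‖T u‖)
    (z : ℕ → X) (hz : IsNBasic2 z) :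
    ∃ (y' : ℕ → X) (hy'mem : ∀ k, y' k ∈ cSpan y) (w : ℕ → X),
      IsNBlockOf y' y ∧ IsBlockOf w z ∧
      Summable (fun k => ‖T ⟨y' k, hy'mem k⟩ - w k‖) := by
  have hstep : ∀ k n, ∃ m, n < m ∧ ∃ pq : X × X,
      pq.1 ∈ span ℂ (y '' Set.Ico n m) ∧ pq.2 ∈ span ℂ (z '' Set.Ico n m) ∧
      ‖pq.1‖ = 1 ∧ pq.2 ≠ 0 ∧ ∀ hp : pq.1 ∈ cSpan y, ‖T ⟨pq.1, hp⟩ - pq.2‖ < (1 / 2 : ℝ) ^ k := by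
    intro k n
    obtain ⟨m, hnm, p, hp, q, hq, h⟩ := hX.exists_span_Ico_near hy hz hc hT n (ε := (1 / 2) ^ k)
      (by positivity)
    exact ⟨m, hnm, (p, q), hp, hq, h⟩
  obtain ⟨N, hN, pq, hpq⟩ := exists_strictMono_chain hstep
  choose hp hq hnorm hq0 hnear using hpq
  refine ⟨fun k => (pq k).1, fun k => span_image_le_cSpan _ (hp k), fun k => (pq k).2,
    ⟨isBlockOf_of_mem_span_Ico hN hp fun k => norm_ne_zero_iff.1 ((hnorm k).symm ▸ one_ne_zero),
      hnorm⟩, isBlockOf_of_mem_span_Ico hN hq hq0, ?_⟩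
  exact Summable.of_nonneg_of_le (fun _ => norm_nonneg _) (fun k => (hnear k _).le)
    (summable_geometric_of_lt_one (by norm_num) (by norm_num))

theorem statement9 {X : Type*} [NormedAddCommGroup X] [NormedSpace ℂ X] [CompleteSpace X]
    (hX : HI X) (y : ℕ → X) (hy : IsNBasic2 y)
    (T : cSpan y →L[ℂ] X) (c : ℝ) (hc : 0 < c)
    (hT : ∀ u : cSpan y, c * ‖u‖ ≤ ‖T u‖)
    (z : ℕ → X) (hz : IsNBasic2 z) (hzblock : ∃ e : ℕ → X, IsNBasic2 e ∧ IsNBlockOf z e) :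
    ∃ (y' : ℕ → X) (hy'mem : ∀ k, y' k ∈ cSpan y) (w : ℕ → X),
      IsNBlockOf y' y ∧ IsBlockOf w z ∧
      Summable (fun k => ‖T ⟨y' k, hy'mem k⟩ - w k‖) :=
  statement9_general hX y hy T c hc hT z hz
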